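/- (Bound on the orthogonal component of the second derivative.) Let d ≥ 1, λ > 0. Let H : ℝ → Matrix (Fin d) (Fin d) ℂ be twice differentiable on [0,1] with each H(s) Hermitian, and let Ψ : ℝ → EuclideanSpace ℂ (Fin d) be twice differentiable on [0,1] with ‖Ψ(s)‖ = 1, H(s) Ψ(s) = 0, and ⟨Ψ'(s), Ψ(s)⟩ = 0 for all s ∈ [0,1]. Assume that for every s ∈ [0,1] the kernel of H(s) is spanned by Ψ(s) and every nonzero eigenvalue μ of H(s) satisfies |μ| ≥ λ. Then for every s ∈ [0,1], the component of Ψ''(s) orthogonal to Ψ(s) satisfies ‖Ψ''(s) − ⟨Ψ(s), Ψ''(s)⟩ Ψ(s)‖ ≤ ‖H''(s)‖/λ + 2·‖H'(s)‖²/λ². -/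

import Mathlib

open scoped InnerProductSpace

/-- The continuous linear map on Euclidean space associated to a matrix;
its operator norm is the operator norm induced by the Euclidean norm. -/
noncomputable def opCLM {d : ℕ} (A : Matrix (Fin d) (Fin d) ℂ) :
    EuclideanSpace ℂ (Fin d) →L[ℂ] EuclideanSpace ℂ (Fin d) :=
  Matrix.toEuclideanCLM (𝕜 := ℂ) A

/-!
Differentiating `H Ψ = 0` twice gives `H Ψ' = -H' Ψ` and `H Ψ'' = -(H'' Ψ + 2 H' Ψ')`.
The spectral gap makes `H` invertible with norm at most `1/λ` on the orthogonal complement of its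
kernel `ℂ Ψ`: expanding in an eigenbasis, `λ ‖v - ⟪Ψ, v⟫ Ψ‖ ≤ ‖H v‖` for all `v`. Since `Ψ' ⊥ Ψ`
this gives `‖Ψ'‖ ≤ ‖H'‖ / λ`, and then `λ ‖Ψ'' - ⟪Ψ, Ψ''⟫ Ψ‖ ≤ ‖H''‖ + 2 ‖H'‖ ‖Ψ'‖`.
-/

theorem HasDerivAt.eq_zero_of_eqOn_zero {𝕜 F : Type*} [NontriviallyNormedField 𝕜]
    [NormedAddCommGroup F] [NormedSpace 𝕜 F] {f : 𝕜 → F} {f' : F} {s : Set 𝕜} {x : 𝕜}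
    (hf : HasDerivAt f f' x) (hs : UniqueDiffWithinAt 𝕜 s x) (hx : x ∈ s)
    (h0 : Set.EqOn f 0 s) : f' = 0 :=
  hs.eq_deriv _ hf.hasDerivWithinAt ((hasDerivWithinAt_const x s 0).congr_of_mem h0 hx)

theorem HasDerivAt.clm_apply_restrictScalars {𝕜 𝕜' E F : Type*} [NontriviallyNormedField 𝕜]
    [NontriviallyNormedField 𝕜'] [NormedAlgebra 𝕜 𝕜'] [NormedAddCommGroup E] [NormedSpace 𝕜' E]
    [NormedSpace 𝕜 E] [IsScalarTower 𝕜 𝕜' E] [NormedAddCommGroup F] [NormedSpace 𝕜' F]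
    [NormedSpace 𝕜 F] [IsScalarTower 𝕜 𝕜' F]
    {c : 𝕜 → E →L[𝕜'] F} {c' : E →L[𝕜'] F} {u : 𝕜 → E} {u' : E} {x : 𝕜}
    (hc : HasDerivAt c c' x) (hu : HasDerivAt u u' x) :
    HasDerivAt (fun y => c y (u y)) (c' (u x) + c x u') x :=
  ((ContinuousLinearMap.restrictScalarsL 𝕜' E F 𝕜 𝕜).hasFDerivAt.comp_hasDerivAt x hc).clm_apply hu

namespace LinearMap.IsSymmetric

variable {𝕜 E : Type*} [RCLike 𝕜] [NormedAddCommGroup E] [InnerProductSpace 𝕜 E]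
  [FiniteDimensional 𝕜 E] {T : E →ₗ[𝕜] E} {lam : ℝ}

theorem mul_norm_le_norm_apply_of_mem_orthogonal_ker (hT : T.IsSymmetric) (hlam : 0 ≤ lam)
    (hgap : ∀ (μ : 𝕜) (v : E), v ≠ 0 → T v = μ • v → μ ≠ 0 → lam ≤ ‖μ‖)
    {w : E} (hw : w ∈ (LinearMap.ker T)ᗮ) : lam * ‖w‖ ≤ ‖T w‖ := by
  set b := hT.eigenvectorBasis rfl
  set μ := hT.eigenvalues rfl
  have hcoord : ∀ i, lam * ‖b.repr w i‖ ≤ ‖b.repr (T w) i‖ := by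
    intro i
    rw [hT.eigenvectorBasis_apply_self_apply, norm_mul, RCLike.norm_ofReal]
    by_cases hμ : μ i = 0
    · have hbi : b i ∈ LinearMap.ker T := by
        simp [b, hT.apply_eigenvectorBasis, hμ, μ]
      rw [b.repr_apply_apply, Submodule.inner_right_of_mem_orthogonal hbi hw]
      simp
    · have := hgap _ _ (b.orthonormal.ne_zero i) (hT.apply_eigenvectorBasis rfl i)
        (RCLike.ofReal_ne_zero.mpr hμ)
      rw [RCLike.norm_ofReal] at this
      exact mul_le_mul_of_nonneg_right this (norm_nonneg _)
  have hsq : (lam * ‖w‖) ^ 2 ≤ ‖T w‖ ^ 2 := by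
    rw [mul_pow, ← b.repr.norm_map w, ← b.repr.norm_map (T w), EuclideanSpace.norm_sq_eq,
      EuclideanSpace.norm_sq_eq, Finset.mul_sum]
    refine Finset.sum_le_sum fun i _ => ?_
    rw [← mul_pow]
    exact pow_le_pow_left₀ (by positivity) (hcoord i) 2
  exact (pow_le_pow_iff_left₀ (by positivity) (norm_nonneg _) two_ne_zero).mp hsq

theorem mul_norm_sub_inner_smul_le (hT : T.IsSymmetric) (hlam : 0 ≤ lam)
    (hgap : ∀ (μ : 𝕜) (v : E), v ≠ 0 → T v = μ • v → μ ≠ 0 → lam ≤ ‖μ‖)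
    {Ψ : E} (hΨ : ‖Ψ‖ = 1) (hΨ0 : T Ψ = 0) (hker : ∀ v, T v = 0 → ∃ c : 𝕜, v = c • Ψ)
    (v : E) : lam * ‖v - ⟪Ψ, v⟫_𝕜 • Ψ‖ ≤ ‖T v‖ := by
  have hker_le : LinearMap.ker T ≤ 𝕜 ∙ Ψ := fun u hu => by
    obtain ⟨c, rfl⟩ := hker u hu
    exact Submodule.smul_mem _ c (Submodule.mem_span_singleton_self Ψ)
  have hw : v - ⟪Ψ, v⟫_𝕜 • Ψ ∈ (LinearMap.ker T)ᗮ := by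
    refine Submodule.orthogonal_le hker_le ?_
    rw [← Submodule.starProjection_unit_singleton 𝕜 hΨ]
    exact Submodule.sub_starProjection_mem_orthogonal v
  calc lam * ‖v - ⟪Ψ, v⟫_𝕜 • Ψ‖ ≤ ‖T (v - ⟪Ψ, v⟫_𝕜 • Ψ)‖ :=
        hT.mul_norm_le_norm_apply_of_mem_orthogonal_ker hlam hgap hw
    _ = ‖T v‖ := by simp [hΨ0]

theorem norm_sub_inner_smul_le_of_apply_eq_zero (hT : T.IsSymmetric) (hlam : 0 < lam)
    (hgap : ∀ (μ : 𝕜) (v : E), v ≠ 0 → T v = μ • v → μ ≠ 0 → lam ≤ ‖μ‖)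
    {Ψ : E} (hΨ : ‖Ψ‖ = 1) (hΨ0 : T Ψ = 0) (hker : ∀ v, T v = 0 → ∃ c : 𝕜, v = c • Ψ)
    {T' T'' : E →L[𝕜] E} {Ψ' Ψ'' : E} (h₁ : T' Ψ + T Ψ' = 0)
    (h₂ : T'' Ψ + (2 : 𝕜) • T' Ψ' + T Ψ'' = 0) (horth : ⟪Ψ, Ψ'⟫_𝕜 = 0) :
    ‖Ψ'' - ⟪Ψ, Ψ''⟫_𝕜 • Ψ‖ ≤ ‖T''‖ / lam + 2 * ‖T'‖ ^ 2 / lam ^ 2 := by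
  have hΨ' : lam * ‖Ψ'‖ ≤ ‖T'‖ :=
    calc lam * ‖Ψ'‖ = lam * ‖Ψ' - ⟪Ψ, Ψ'⟫_𝕜 • Ψ‖ := by rw [horth, zero_smul, sub_zero]
      _ ≤ ‖T Ψ'‖ := mul_norm_sub_inner_smul_le hT hlam.le hgap hΨ hΨ0 hker Ψ'
      _ = ‖T' Ψ‖ := by rw [eq_neg_of_add_eq_zero_right h₁, norm_neg]
      _ ≤ ‖T'‖ := by simpa [hΨ] using T'.le_opNorm Ψ
  have hΨ'' : lam * ‖Ψ'' - ⟪Ψ, Ψ''⟫_𝕜 • Ψ‖ ≤ ‖T''‖ + 2 * (‖T'‖ * ‖Ψ'‖) :=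
    calc lam * ‖Ψ'' - ⟪Ψ, Ψ''⟫_𝕜 • Ψ‖ ≤ ‖T Ψ''‖ :=
          mul_norm_sub_inner_smul_le hT hlam.le hgap hΨ hΨ0 hker Ψ''
      _ = ‖T'' Ψ + (2 : 𝕜) • T' Ψ'‖ := by rw [eq_neg_of_add_eq_zero_right h₂, norm_neg]
      _ ≤ ‖T''‖ + 2 * (‖T'‖ * ‖Ψ'‖) := by
          refine norm_add_le_of_le (by simpa [hΨ] using T''.le_opNorm Ψ) ?_
          rw [norm_smul, RCLike.norm_ofNat]
          gcongr
          exact T'.le_opNorm Ψ'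
  rw [div_add_div _ _ hlam.ne' (by positivity), le_div_iff₀ (by positivity)]
  nlinarith [mul_le_mul_of_nonneg_left hΨ'' hlam.le, mul_le_mul_of_nonneg_left hΨ' (norm_nonneg T')]

end LinearMap.IsSymmetric

theorem isSymmetric_opCLM {d : ℕ} {A : Matrix (Fin d) (Fin d) ℂ} (hA : A.IsHermitian) :
    (opCLM A : EuclideanSpace ℂ (Fin d) →ₗ[ℂ] EuclideanSpace ℂ (Fin d)).IsSymmetric := by
  rw [opCLM, Matrix.coe_toEuclideanCLM_eq_toEuclideanLin]
  exact Matrix.isSymmetric_toEuclideanLin_iff.mpr hA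

theorem second_deriv_orthogonal_component_bound_general {d : ℕ}
    (lam : ℝ) (hlam : 0 < lam)
    (H H' H'' : ℝ → Matrix (Fin d) (Fin d) ℂ)
    (hHd1 : ∀ s ∈ Set.Icc (0:ℝ) 1, HasDerivAt (fun t => opCLM (H t)) (opCLM (H' s)) s)
    (hHd2 : ∀ s ∈ Set.Icc (0:ℝ) 1, HasDerivAt (fun t => opCLM (H' t)) (opCLM (H'' s)) s)
    (hherm : ∀ s ∈ Set.Icc (0:ℝ) 1, (H s).IsHermitian)
    (Ψ Ψ' Ψ'' : ℝ → EuclideanSpace ℂ (Fin d))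
    (hΨd1 : ∀ s ∈ Set.Icc (0:ℝ) 1, HasDerivAt Ψ (Ψ' s) s)
    (hΨd2 : ∀ s ∈ Set.Icc (0:ℝ) 1, HasDerivAt Ψ' (Ψ'' s) s)
    (hΨnorm : ∀ s ∈ Set.Icc (0:ℝ) 1, ‖Ψ s‖ = 1)
    (heig : ∀ s ∈ Set.Icc (0:ℝ) 1, opCLM (H s) (Ψ s) = 0)
    (hphase : ∀ s ∈ Set.Icc (0:ℝ) 1, ⟪Ψ' s, Ψ s⟫_ℂ = 0)
    (hker : ∀ s ∈ Set.Icc (0:ℝ) 1, ∀ v : EuclideanSpace ℂ (Fin d),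
      opCLM (H s) v = 0 → ∃ c : ℂ, v = c • Ψ s)
    (hgap : ∀ s ∈ Set.Icc (0:ℝ) 1, ∀ (μ : ℂ) (v : EuclideanSpace ℂ (Fin d)), v ≠ 0 →
      opCLM (H s) v = μ • v → μ ≠ 0 → lam ≤ ‖μ‖) :
    ∀ s ∈ Set.Icc (0:ℝ) 1,
      ‖Ψ'' s - ⟪Ψ s, Ψ'' s⟫_ℂ • Ψ s‖ ≤
        ‖opCLM (H'' s)‖ / lam + 2 * ‖opCLM (H' s)‖ ^ 2 / lam ^ 2 := by
  intro s hs
  have hunique := uniqueDiffOn_Icc (zero_lt_one' ℝ)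
  have h₁ : ∀ t ∈ Set.Icc (0:ℝ) 1, opCLM (H' t) (Ψ t) + opCLM (H t) (Ψ' t) = 0 := fun t ht =>
    ((hHd1 t ht).clm_apply_restrictScalars (hΨd1 t ht)).eq_zero_of_eqOn_zero
      (hunique t ht) ht heig
  have h₂ : opCLM (H'' s) (Ψ s) + (2 : ℂ) • opCLM (H' s) (Ψ' s) + opCLM (H s) (Ψ'' s) = 0 := by
    rw [← ((((hHd2 s hs).clm_apply_restrictScalars (hΨd1 s hs)).add
      ((hHd1 s hs).clm_apply_restrictScalars (hΨd2 s hs))).eq_zero_of_eqOn_zero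
        (hunique s hs) hs h₁)]
    module
  exact LinearMap.IsSymmetric.norm_sub_inner_smul_le_of_apply_eq_zero
    (isSymmetric_opCLM (hherm s hs)) hlam (hgap s hs) (hΨnorm s hs) (heig s hs) (hker s hs)
    (h₁ s hs) h₂ (inner_eq_zero_symm.mp (hphase s hs))

/-- **Bound on the orthogonal component of the second derivative.** -/
theorem second_deriv_orthogonal_component_bound {d : ℕ} (hd : 1 ≤ d)
    (lam : ℝ) (hlam : 0 < lam)
    (H H' H'' : ℝ → Matrix (Fin d) (Fin d) ℂ)
    (hHd1 : ∀ s ∈ Set.Icc (0:ℝ) 1, HasDerivAt (fun t => opCLM (H t)) (opCLM (H' s)) s)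
    (hHd2 : ∀ s ∈ Set.Icc (0:ℝ) 1, HasDerivAt (fun t => opCLM (H' t)) (opCLM (H'' s)) s)
    (hherm : ∀ s ∈ Set.Icc (0:ℝ) 1, (H s).IsHermitian)
    (Ψ Ψ' Ψ'' : ℝ → EuclideanSpace ℂ (Fin d))
    (hΨd1 : ∀ s ∈ Set.Icc (0:ℝ) 1, HasDerivAt Ψ (Ψ' s) s)
    (hΨd2 : ∀ s ∈ Set.Icc (0:ℝ) 1, HasDerivAt Ψ' (Ψ'' s) s)
    (hΨnorm : ∀ s ∈ Set.Icc (0:ℝ) 1, ‖Ψ s‖ = 1)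
    (heig : ∀ s ∈ Set.Icc (0:ℝ) 1, opCLM (H s) (Ψ s) = 0)
    (hphase : ∀ s ∈ Set.Icc (0:ℝ) 1, ⟪Ψ' s, Ψ s⟫_ℂ = 0)
    (hker : ∀ s ∈ Set.Icc (0:ℝ) 1, ∀ v : EuclideanSpace ℂ (Fin d),
      opCLM (H s) v = 0 → ∃ c : ℂ, v = c • Ψ s)
    (hgap : ∀ s ∈ Set.Icc (0:ℝ) 1, ∀ (μ : ℂ) (v : EuclideanSpace ℂ (Fin d)), v ≠ 0 →
      opCLM (H s) v = μ • v → μ ≠ 0 → lam ≤ ‖μ‖) :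
    ∀ s ∈ Set.Icc (0:ℝ) 1,
      ‖Ψ'' s - ⟪Ψ s, Ψ'' s⟫_ℂ • Ψ s‖ ≤
        ‖opCLM (H'' s)‖ / lam + 2 * ‖opCLM (H' s)‖ ^ 2 / lam ^ 2 :=
  second_deriv_orthogonal_component_bound_general lam hlam H H' H'' hHd1 hHd2 hherm Ψ Ψ' Ψ'' hΨd1
    hΨd2 hΨnorm heig hphase hker hgap
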